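/- Let n ≥ 3, |A| ≥ 3, fix a⃗ = (a_1,…,a_n) ∈ A^n, and let b be an ex-post equilibrium for the class of VCG games over (N,A,R(a⃗)). Then b_i(Z_i^{(a_i,s)})(a_i) − b_i(Z_i^{(a_i,s)})(a_k) = s for every agent i, every s > 0, and every index k with a_k ≠ a_i. -/
import Mathlib


open Finset

variable {N A : Type*}

/-- `M` is a social-welfare maximizer for the coalition `S`:
for every announced profile, the chosen alternative maximizes the announced welfare of `S`. -/
def IsSWM (S : Finset N) (M : (N → A → ℝ) → A) : Prop :=
  ∀ w : N → A → ℝ, ∀ a : A, ∑ j ∈ S, w j a ≤ ∑ j ∈ S, w j (M w)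

/-- `h` is a valid vector of VCG transfer functions: `h i` does not depend on
agent `i`'s own announcement. -/
def ValidH (h : N → (N → A → ℝ) → ℝ) : Prop :=
  ∀ i : N, ∀ β β' : N → A → ℝ, (∀ j, j ≠ i → β j = β' j) → h i β = h i β'

/-- Utility of agent `i` of coalition `S`, with true valuation `vi`, when the announced
profile is `β`, under the mechanism `M` and transfers `h`. -/
noncomputable def utility [DecidableEq N] (S : Finset N) (M : (N → A → ℝ) → A)
    (h : N → (N → A → ℝ) → ℝ) (i : N) (vi : A → ℝ) (β : N → A → ℝ) : ℝ :=
  vi (M β) + ∑ j ∈ S.erase i, β j (M β) - h i β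

/-- The strategy profile `b` (restricted to `S`) is an ex-post equilibrium of the
VCG game `Γ(S, M, h, V)`: no agent of `S` can profit from a unilateral deviation,
at any profile of true valuations drawn from `V`. -/
def ExPostEq [DecidableEq N] (S : Finset N) (M : (N → A → ℝ) → A)
    (h : N → (N → A → ℝ) → ℝ) (V : N → Set (A → ℝ))
    (b : N → (A → ℝ) → A → ℝ) : Prop :=
  ∀ i ∈ S, ∀ v : N → A → ℝ, (∀ j ∈ S, v j ∈ V j) → ∀ d : A → ℝ,
    utility S M h i (v i) (Function.update (fun j => b j (v j)) i d) ≤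
      utility S M h i (v i) (fun j => b j (v j))

/-- `b` is an ex-post equilibrium for the class of VCG games over `(N, A, V)`. -/
def ExPostClass [DecidableEq N] (V : N → Set (A → ℝ))
    (b : N → (A → ℝ) → A → ℝ) : Prop :=
  ∀ S : Finset N, S.Nonempty → ∀ M : (N → A → ℝ) → A, IsSWM S M →
    ∀ h : N → (N → A → ℝ) → ℝ, ValidH h → ExPostEq S M h V b

/-- `Rset a0` is the set of nonnegative valuations having `a0` as a maximum. -/
def Rset (a0 : A) : Set (A → ℝ) :=
  {v | (∀ a, 0 ≤ v a) ∧ ∀ a, v a ≤ v a0}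

/-- `b` is nearly truth telling over `A'`, relative to the valuation sets `V`. -/
def NearlyTT (V : N → Set (A → ℝ)) (A' : Set A) (b : N → (A → ℝ) → A → ℝ) : Prop :=
  ∀ i : N, ∃ f : (A → ℝ) → ℝ, ∀ v ∈ V i,
    (∀ a ∈ A', b i v a = v a + f v) ∧
    ∃ C : ℝ, (∀ a ∈ A', C ≤ b i v a) ∧ ∀ a ∉ A', b i v a = C

/-- The valuation assigning value `s` to the alternative `a` and `0` to every other one. -/
noncomputable def Zval [DecidableEq A] (a : A) (s : ℝ) : A → ℝ :=
  fun x => if x = a then s else 0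

set_option linter.unusedSectionVars false

section Aux

variable [Fintype N] [DecidableEq N] [Fintype A] [DecidableEq A]

/-- a maximizer of `f` over the (finite, nonempty) alternative set -/
noncomputable def amax [Nonempty A] (f : A → ℝ) : A :=
  (Finset.exists_max_image (Finset.univ : Finset A) f Finset.univ_nonempty).choose

lemma amax_spec [Nonempty A] (f : A → ℝ) : ∀ z, f z ≤ f (amax f) := by
  intro z
  have h := (Finset.exists_max_image (Finset.univ : Finset A) f Finset.univ_nonempty).choose_spec
  exact h.2 z (Finset.mem_univ z)

/-- Master consequence of the ex-post-equilibrium-for-the-class property: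
if `x` maximizes the total announced welfare of coalition `S`, then for every member `i`
and every alternative `y`, `x` is at least as good as `y` for `i`'s true valuation plus
others' bids. -/
lemma MC [Nonempty A] {V : N → Set (A → ℝ)} {b : N → (A → ℝ) → A → ℝ}
    (hb : ExPostClass V b) (S : Finset N) (hS : S.Nonempty)
    (v : N → A → ℝ) (hv : ∀ j ∈ S, v j ∈ V j)
    (x : A) (hx : ∀ z, ∑ j ∈ S, b j (v j) z ≤ ∑ j ∈ S, b j (v j) x)
    (i : N) (hi : i ∈ S) (y : A) :
    v i y + ∑ j ∈ S.erase i, b j (v j) y ≤ v i x + ∑ j ∈ S.erase i, b j (v j) x := by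
  classical
  set β : N → A → ℝ := fun j => b j (v j) with hβdef
  set E : A → ℝ := fun z => ∑ j ∈ S.erase i, β j z with hEdef
  set R : ℝ := 1 + |β i y| + (E (amax E) - E y) with hRdef
  have hEmax : ∀ z, E z ≤ E (amax E) := amax_spec E
  have hRE : ∀ z, E z < R + E y := by
    intro z
    have h1 := hEmax z
    have h2 := abs_nonneg (β i y)
    rw [hRdef]; linarith
  have hRy : β i y < R := by
    have h1 := hEmax y
    have h2 := le_abs_self (β i y)
    rw [hRdef]; linarith
  set d : A → ℝ := fun z => if z = y then R else 0 with hddef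
  set β' : N → A → ℝ := Function.update β i d with hβ'def
  have hβ'i : β' i = d := Function.update_self i d β
  have hβ'j : ∀ j, j ≠ i → β' j = β j := fun j hj => Function.update_of_ne hj d β
  have hne : β' ≠ β := by
    intro h
    have h0 : β' i y = β i y := by rw [h]
    rw [hβ'i] at h0
    rw [hddef] at h0
    simp only [if_pos rfl] at h0
    exact absurd h0 (ne_of_gt hRy)
  have hsum' : ∀ z, ∑ j ∈ S, β' j z = d z + E z := by
    intro z
    rw [hEdef]
    rw [← Finset.add_sum_erase S (fun j => β' j z) hi]
    congr 1
    · rw [hβ'i]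
    · exact Finset.sum_congr rfl fun j hj => by rw [hβ'j j (Finset.ne_of_mem_erase hj)]
  -- the mechanism
  set M : (N → A → ℝ) → A := fun w => if w = β then x else amax (fun z => ∑ j ∈ S, w j z)
    with hMdef
  have hSWM : IsSWM S M := by
    intro w z
    simp only [hMdef]
    by_cases hw : w = β
    · rw [if_pos hw, hw]; exact hx z
    · rw [if_neg hw]; exact amax_spec (fun z => ∑ j ∈ S, w j z) z
  have hVH : ValidH (N := N) (A := A) (fun _ _ => (0:ℝ)) := by
    intro _ _ _ _; rfl
  have hdz : ∀ z, z ≠ y → d z = 0 := by intro z hz; rw [hddef]; exact if_neg hz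
  have hdy : d y = R := by rw [hddef]; exact if_pos rfl
  have hMβ : M β = x := by simp [hMdef]
  have hMβ' : M β' = y := by
    have h1 : M β' = amax (fun z => ∑ j ∈ S, β' j z) := by simp only [hMdef]; exact if_neg hne
    have h2 : ∀ z, z ≠ y → (∑ j ∈ S, β' j z) < (∑ j ∈ S, β' j y) := by
      intro z hz
      rw [hsum' z, hsum' y, hdz z hz, hdy]
      have := hRE z; linarith
    by_contra hcon
    rw [h1] at hcon
    have h3 := amax_spec (fun z => ∑ j ∈ S, β' j z) y
    have h4 := h2 _ hcon
    rw [h1]  at *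
    exact absurd h3 (not_le.mpr h4)
  have hEq := hb S hS M hSWM (fun _ _ => 0) hVH i hi v hv d
  rw [show Function.update (fun j => b j (v j)) i d = β' from rfl] at hEq
  rw [show (fun j => b j (v j)) = β from rfl] at hEq
  rw [utility, utility, hMβ, hMβ'] at hEq
  have e1 : ∑ j ∈ S.erase i, β' j y = ∑ j ∈ S.erase i, β j y :=
    Finset.sum_congr rfl fun j hj => by rw [hβ'j j (Finset.ne_of_mem_erase hj)]
  rw [e1] at hEq
  simp only [sub_zero] at hEq
  exact hEq

/-- specialization of `MC` to a singleton coalition -/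
lemma MC1 [Nonempty A] {V : N → Set (A → ℝ)} {b : N → (A → ℝ) → A → ℝ}
    (hb : ExPostClass V b) (p : N) {vp : A → ℝ} (hvp : vp ∈ V p)
    (x : A) (hx : ∀ z, b p vp z ≤ b p vp x) (y : A) : vp y ≤ vp x := by
  classical
  have h := MC hb {p} ⟨p, Finset.mem_singleton_self p⟩ (fun _ => vp)
    (by intro j hj; rw [Finset.mem_singleton] at hj; subst hj; exact hvp) x
    (by intro z; simpa using hx z) p (Finset.mem_singleton_self p) y
  simpa using h

/-- specialization of `MC` to a two-agent coalition -/
lemma MC2 [Nonempty A] {V : N → Set (A → ℝ)} {b : N → (A → ℝ) → A → ℝ}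
    (hb : ExPostClass V b) {p q : N} (hpq : p ≠ q)
    {vp vq : A → ℝ} (hvp : vp ∈ V p) (hvq : vq ∈ V q)
    (x : A) (hx : ∀ z, b p vp z + b q vq z ≤ b p vp x + b q vq x) (y : A) :
    (vp y + b q vq y ≤ vp x + b q vq x) ∧ (vq y + b p vp y ≤ vq x + b p vp x) := by
  classical
  set v : N → A → ℝ := fun j => if j = p then vp else vq with hv
  have hvp' : v p = vp := by rw [hv]; simp
  have hvq' : v q = vq := by rw [hv]; simp [hpq.symm]
  have hS : ({p, q} : Finset N).Nonempty := ⟨p, by simp⟩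
  have hmem : ∀ j ∈ ({p, q} : Finset N), v j ∈ V j := by
    intro j hj
    rcases Finset.mem_insert.mp hj with h | h
    · subst h; rw [hvp']; exact hvp
    · rw [Finset.mem_singleton] at h; subst h; rw [hvq']; exact hvq
  have hpq' : p ∉ ({q} : Finset N) := by simp [hpq]
  have hsum : ∀ z, ∑ j ∈ ({p, q} : Finset N), b j (v j) z = b p vp z + b q vq z := by
    intro z
    rw [Finset.sum_insert hpq', Finset.sum_singleton, hvp', hvq']
  have hxs : ∀ z, ∑ j ∈ ({p, q} : Finset N), b j (v j) z
      ≤ ∑ j ∈ ({p, q} : Finset N), b j (v j) x := by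
    intro z; rw [hsum z, hsum x]; exact hx z
  constructor
  · have h := MC hb {p, q} hS v hmem x hxs p (by simp) y
    have herase : ({p, q} : Finset N).erase p = {q} := Finset.erase_insert hpq'
    rw [herase, Finset.sum_singleton, Finset.sum_singleton, hvp', hvq'] at h
    exact h
  · have h := MC hb {p, q} hS v hmem x hxs q (by simp) y
    have herase : ({p, q} : Finset N).erase q = {p} := by
      rw [Finset.erase_insert_of_ne hpq, Finset.erase_singleton]
      rfl
    rw [herase, Finset.sum_singleton, Finset.sum_singleton, hvq', hvp'] at h
    exact h

/-- specialization of `MC` to a three-agent coalition -/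
lemma MC3 [Nonempty A] {V : N → Set (A → ℝ)} {b : N → (A → ℝ) → A → ℝ}
    (hb : ExPostClass V b) {p q r : N} (hpq : p ≠ q) (hpr : p ≠ r) (hqr : q ≠ r)
    {vp vq vr : A → ℝ} (hvp : vp ∈ V p) (hvq : vq ∈ V q) (hvr : vr ∈ V r)
    (x : A)
    (hx : ∀ z, b p vp z + b q vq z + b r vr z ≤ b p vp x + b q vq x + b r vr x) (y : A) :
    (vp y + (b q vq y + b r vr y) ≤ vp x + (b q vq x + b r vr x)) ∧
    (vq y + (b p vp y + b r vr y) ≤ vq x + (b p vp x + b r vr x)) ∧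
    (vr y + (b p vp y + b q vq y) ≤ vr x + (b p vp x + b q vq x)) := by
  classical
  set v : N → A → ℝ := fun j => if j = p then vp else if j = q then vq else vr with hv
  have hvp' : v p = vp := by rw [hv]; simp
  have hvq' : v q = vq := by rw [hv]; simp [hpq.symm]
  have hvr' : v r = vr := by rw [hv]; simp [hpr.symm, hqr.symm]
  have hS : ({p, q, r} : Finset N).Nonempty := ⟨p, by simp⟩
  have hmem : ∀ j ∈ ({p, q, r} : Finset N), v j ∈ V j := by
    intro j hj
    rcases Finset.mem_insert.mp hj with h | hj2
    · subst h; rw [hvp']; exact hvp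
    · rcases Finset.mem_insert.mp hj2 with h | hj3
      · subst h; rw [hvq']; exact hvq
      · rw [Finset.mem_singleton] at hj3; subst hj3; rw [hvr']; exact hvr
  have hqr' : q ∉ ({r} : Finset N) := by simp [hqr]
  have hp' : p ∉ ({q, r} : Finset N) := by simp [hpq, hpr]
  have hsum : ∀ z, ∑ j ∈ ({p, q, r} : Finset N), b j (v j) z
      = b p vp z + (b q vq z + b r vr z) := by
    intro z
    rw [Finset.sum_insert hp', Finset.sum_insert hqr', Finset.sum_singleton, hvp', hvq', hvr']
  have hxs : ∀ z, ∑ j ∈ ({p, q, r} : Finset N), b j (v j) z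
      ≤ ∑ j ∈ ({p, q, r} : Finset N), b j (v j) x := by
    intro z; rw [hsum z, hsum x]; have := hx z; linarith
  refine ⟨?_, ?_, ?_⟩
  · have h := MC hb {p, q, r} hS v hmem x hxs p (by simp) y
    have herase : ({p, q, r} : Finset N).erase p = {q, r} := Finset.erase_insert hp'
    rw [herase, Finset.sum_insert hqr', Finset.sum_insert hqr', Finset.sum_singleton,
      Finset.sum_singleton, hvp', hvq', hvr'] at h
    exact h
  · have h := MC hb {p, q, r} hS v hmem x hxs q (by simp) y
    have herase : ({p, q, r} : Finset N).erase q = {p, r} := by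
      rw [Finset.erase_insert_of_ne hpq, Finset.erase_insert hqr']
    have hpr' : p ∉ ({r} : Finset N) := by simp [hpr]
    rw [herase, Finset.sum_insert hpr', Finset.sum_insert hpr', Finset.sum_singleton,
      Finset.sum_singleton, hvp', hvq', hvr'] at h
    exact h
  · have h := MC hb {p, q, r} hS v hmem x hxs r (by simp) y
    have herase : ({p, q, r} : Finset N).erase r = {p, q} := by
      rw [Finset.erase_insert_of_ne hpr, Finset.erase_insert_of_ne hqr,
        Finset.erase_singleton]
      rfl
    have hpq'' : p ∉ ({q} : Finset N) := by simp [hpq]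
    rw [herase, Finset.sum_insert hpq'', Finset.sum_insert hpq'', Finset.sum_singleton,
      Finset.sum_singleton, hvp', hvq', hvr'] at h
    exact h

/-- the two-peak indicator valuation -/
noncomputable def Ival [DecidableEq A] (α e : A) (s : ℝ) : A → ℝ :=
  fun x => if x = α ∨ x = e then s else 0

section Game

variable [Nonempty A]
variable {avec : N → A} {b : N → (A → ℝ) → A → ℝ}

lemma Zval_self (α : A) (s : ℝ) : Zval α s α = s := if_pos rfl

lemma Zval_ne (α : A) (s : ℝ) {x : A} (hx : x ≠ α) : Zval α s x = 0 := if_neg hx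

lemma Zval_nonneg (α : A) {s : ℝ} (hs : 0 ≤ s) (x : A) : 0 ≤ Zval α s x := by
  unfold Zval; split <;> simp [hs]

lemma Zval_mem (α : A) {s : ℝ} (hs : 0 ≤ s) : Zval α s ∈ Rset α := by
  refine ⟨Zval_nonneg α hs, fun x => ?_⟩
  rw [Zval_self]
  unfold Zval; split <;> simp [hs]

lemma Ival_self (α e : A) (s : ℝ) : Ival α e s α = s := if_pos (Or.inl rfl)

lemma Ival_peak (α e : A) (s : ℝ) : Ival α e s e = s := if_pos (Or.inr rfl)

lemma Ival_zero (α e : A) (s : ℝ) {x : A} (h1 : x ≠ α) (h2 : x ≠ e) : Ival α e s x = 0 := by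
  unfold Ival
  rw [if_neg]
  rintro (h | h) <;> [exact h1 h; exact h2 h]

lemma Ival_le (α e : A) {s : ℝ} (hs : 0 ≤ s) (x : A) : Ival α e s x ≤ s := by
  unfold Ival; split <;> simp [hs]

lemma Ival_mem (α e : A) {s : ℝ} (hs : 0 ≤ s) : Ival α e s ∈ Rset e := by
  refine ⟨fun x => ?_, fun x => ?_⟩
  · unfold Ival; split <;> simp [hs]
  · rw [Ival_peak]; exact Ival_le α e hs x

/-- L1 : on a single-minded valuation, the bid is uniquely maximized at the peak. -/
lemma peak_strict (hb : ExPostClass (fun i => Rset (avec i)) b) (p : N) {s : ℝ} (hs : 0 < s)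
    {x : A} (hx : x ≠ avec p) :
    b p (Zval (avec p) s) x < b p (Zval (avec p) s) (avec p) := by
  classical
  set β := b p (Zval (avec p) s) with hβ
  have hmem : Zval (avec p) s ∈ Rset (avec p) := Zval_mem _ hs.le
  have key : ∀ m, (∀ z, β z ≤ β m) → m = avec p := by
    intro m hm
    by_contra hne
    have h := MC1 hb p hmem m hm (avec p)
    rw [Zval_self, Zval_ne _ _ hne] at h
    linarith
  have hmax : ∀ z, β z ≤ β (avec p) := by
    intro z
    have h := amax_spec β
    have e := key (amax β) h
    calc β z ≤ β (amax β) := h z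
    _ = β (avec p) := by rw [e]
  by_contra hge
  push_neg at hge
  exact hx (key x fun z => (hmax z).trans hge)

/-- in a two-agent coalition with single-minded valuations, total bids are maximized
at one of the two peaks -/
lemma pair_core (hb : ExPostClass (fun i => Rset (avec i)) b) {p q : N} (hpq : p ≠ q)
    (hα : avec p ≠ avec q) {s t : ℝ} (hs : 0 < s) (ht : 0 < t) :
    ∀ z, b p (Zval (avec p) s) z + b q (Zval (avec q) t) z
        ≤ max (b p (Zval (avec p) s) (avec p) + b q (Zval (avec q) t) (avec p))
              (b p (Zval (avec p) s) (avec q) + b q (Zval (avec q) t) (avec q)) := by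
  classical
  set β := b p (Zval (avec p) s) with hβ
  set γ := b q (Zval (avec q) t) with hγ
  set m := amax (fun z => β z + γ z) with hm
  have hmax : ∀ z, β z + γ z ≤ β m + γ m := amax_spec _
  have hmem : m = avec p ∨ m = avec q := by
    by_contra h
    push_neg at h
    have h2 := (MC2 hb hpq (Zval_mem _ hs.le) (Zval_mem _ ht.le) m hmax (avec q)).1
    rw [Zval_ne _ _ hα.symm, Zval_ne _ _ h.1] at h2
    have h3 := peak_strict hb q ht h.2
    rw [← hγ] at h3
    linarith
  intro z
  rcases hmem with h | h
  · exact le_max_of_le_left ((hmax z).trans (by rw [h]))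
  · exact le_max_of_le_right ((hmax z).trans (by rw [h]))

/-- L2, case where the row peak wins -/
lemma pairA (hb : ExPostClass (fun i => Rset (avec i)) b) {p q : N} (hpq : p ≠ q)
    (hα : avec p ≠ avec q) {s t : ℝ} (hs : 0 < s) (ht : 0 < t)
    (hW : b p (Zval (avec p) s) (avec q) + b q (Zval (avec q) t) (avec q)
        ≤ b p (Zval (avec p) s) (avec p) + b q (Zval (avec q) t) (avec p)) :
    (b q (Zval (avec q) t) (avec q) - b q (Zval (avec q) t) (avec p) ≤ s) ∧
    (t ≤ b p (Zval (avec p) s) (avec p) - b p (Zval (avec p) s) (avec q)) := by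
  classical
  have hcore := pair_core hb hpq hα hs ht
  have hmax : ∀ z, b p (Zval (avec p) s) z + b q (Zval (avec q) t) z
      ≤ b p (Zval (avec p) s) (avec p) + b q (Zval (avec q) t) (avec p) := by
    intro z; exact (hcore z).trans (max_le le_rfl hW)
  have h1 := (MC2 hb hpq (Zval_mem _ hs.le) (Zval_mem _ ht.le) (avec p) hmax (avec q)).1
  rw [Zval_ne _ _ hα.symm, Zval_self] at h1
  have h2 := (MC2 hb hpq (Zval_mem _ hs.le) (Zval_mem _ ht.le) (avec p) hmax (avec q)).2
  rw [Zval_self, Zval_ne _ _ hα] at h2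
  constructor <;> linarith

/-- L2, case where the column peak wins -/
lemma pairC (hb : ExPostClass (fun i => Rset (avec i)) b) {p q : N} (hpq : p ≠ q)
    (hα : avec p ≠ avec q) {s t : ℝ} (hs : 0 < s) (ht : 0 < t)
    (hW : b p (Zval (avec p) s) (avec p) + b q (Zval (avec q) t) (avec p)
        ≤ b p (Zval (avec p) s) (avec q) + b q (Zval (avec q) t) (avec q)) :
    (s ≤ b q (Zval (avec q) t) (avec q) - b q (Zval (avec q) t) (avec p)) ∧
    (b p (Zval (avec p) s) (avec p) - b p (Zval (avec p) s) (avec q) ≤ t) := by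
  classical
  have hcore := pair_core hb hpq hα hs ht
  have hmax : ∀ z, b p (Zval (avec p) s) z + b q (Zval (avec q) t) z
      ≤ b p (Zval (avec p) s) (avec q) + b q (Zval (avec q) t) (avec q) := by
    intro z; exact (hcore z).trans (max_le hW le_rfl)
  have h1 := (MC2 hb hpq (Zval_mem _ hs.le) (Zval_mem _ ht.le) (avec q) hmax (avec p)).1
  rw [Zval_ne _ _ hα.symm, Zval_self] at h1
  have h2 := (MC2 hb hpq (Zval_mem _ hs.le) (Zval_mem _ ht.le) (avec q) hmax (avec p)).2
  rw [Zval_self, Zval_ne _ _ hα] at h2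
  constructor <;> linarith

/-- L3 : the bid on a two-peak `{α, e}` indicator valuation is maximized at `α`,
whenever some agent `p` has peak `α`. -/
lemma ind_peak (hb : ExPostClass (fun i => Rset (avec i)) b) {p r : N} (hpr : p ≠ r)
    {s2 : ℝ} (h2 : 0 < s2) (x : A) :
    b r (Ival (avec p) (avec r) s2) x ≤ b r (Ival (avec p) (avec r) s2) (avec p) := by
  classical
  by_contra hgt
  push_neg at hgt
  set η := b r (Ival (avec p) (avec r) s2) with hη
  set s : ℝ := (η x - η (avec p)) / 2 with hsdef
  have hs : 0 < s := by rw [hsdef]; linarith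
  set β := b p (Zval (avec p) s) with hβ
  set W := fun z => β z + η z with hW
  have hmW : ∀ z, W z ≤ W (amax W) := amax_spec W
  have hI : Ival (avec p) (avec r) s2 ∈ Rset (avec r) := Ival_mem _ _ h2.le
  have hmp : amax W = avec p := by
    by_contra hne
    have h := (MC2 hb hpr (Zval_mem _ hs.le) hI (amax W) hmW (avec p)).2
    rw [Ival_self] at h
    have h2' := Ival_le (avec p) (avec r) h2.le (amax W)
    have h3 := peak_strict hb p hs hne
    rw [← hβ] at h
    linarith
  have hmax : ∀ z, W z ≤ W (avec p) := by
    intro z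
    have := hmW z
    rwa [hmp] at this
  have h := (MC2 hb hpr (Zval_mem _ hs.le) hI (avec p) hmax x).1
  rw [Zval_self] at h
  have h0 := Zval_nonneg (avec p) hs.le x
  rw [← hη] at h
  rw [hsdef] at *
  linarith

/-- L4 : no undershooting, when the third agent's peak differs from the column peak. -/
lemma undershoot₁ (hb : ExPostClass (fun i => Rset (avec i)) b) {p q r : N}
    (hpq : p ≠ q) (hpr : p ≠ r) (hqr : q ≠ r)
    (hα : avec p ≠ avec q) (her : avec r ≠ avec q) {s0 : ℝ} (h0 : 0 < s0) :
    s0 ≤ b p (Zval (avec p) s0) (avec p) - b p (Zval (avec p) s0) (avec q) := by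
  classical
  by_contra hcon
  push_neg at hcon
  have hd0 : 0 < b p (Zval (avec p) s0) (avec p) - b p (Zval (avec p) s0) (avec q) := by
    have := peak_strict hb p h0 hα.symm
    linarith
  -- step 1
  have step1 : ∀ t, b p (Zval (avec p) s0) (avec p) - b p (Zval (avec p) s0) (avec q) < t →
      t < s0 →
      s0 ≤ b q (Zval (avec q) t) (avec q) - b q (Zval (avec q) t) (avec p) := by
    intro t h1 h2
    have ht : 0 < t := lt_trans hd0 h1
    by_cases hW : b p (Zval (avec p) s0) (avec q) + b q (Zval (avec q) t) (avec q)
        ≤ b p (Zval (avec p) s0) (avec p) + b q (Zval (avec q) t) (avec p)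
    · exfalso
      have hA := (pairA hb hpq hα h0 ht hW).2
      linarith
    · push_neg at hW
      exact (pairC hb hpq hα h0 ht hW.le).1
  -- steps 2-3
  have step3 : ∀ s2 : ℝ, 0 < s2 →
      s2 < s0 - (b p (Zval (avec p) s0) (avec p) - b p (Zval (avec p) s0) (avec q)) →
      b r (Ival (avec p) (avec r) s2) (avec q) = b r (Ival (avec p) (avec r) s2) (avec p) := by
    intro s2 hs2 hs2'
    have hpeak : ∀ x, b r (Ival (avec p) (avec r) s2) x ≤ b r (Ival (avec p) (avec r) s2) (avec p) :=
      fun x => ind_peak hb hpr hs2 x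
    have step2 : ∀ t, b p (Zval (avec p) s0) (avec p) - b p (Zval (avec p) s0) (avec q) < t →
        t < s0 →
        b r (Ival (avec p) (avec r) s2) (avec p) - b r (Ival (avec p) (avec r) s2) (avec q)
          ≤ t - (b p (Zval (avec p) s0) (avec p) - b p (Zval (avec p) s0) (avec q)) := by
      intro t h1 h2
      have ht : 0 < t := lt_trans hd0 h1
      have hG := step1 t h1 h2
      obtain ⟨x0, hx0⟩ : ∃ x0 : A, ∀ z,
          b p (Zval (avec p) s0) z + b q (Zval (avec q) t) z + b r (Ival (avec p) (avec r) s2) z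
          ≤ b p (Zval (avec p) s0) x0 + b q (Zval (avec q) t) x0
            + b r (Ival (avec p) (avec r) s2) x0 := ⟨amax _, amax_spec _⟩
      have hmem : x0 = avec p ∨ x0 = avec q := by
        by_contra hne
        push_neg at hne
        have h := (MC3 hb hpq hpr hqr (Zval_mem _ h0.le) (Zval_mem _ ht.le)
          (Ival_mem _ _ hs2.le) x0 hx0 (avec p)).2.1
        rw [Zval_ne _ _ hα, Zval_ne _ _ hne.2] at h
        have h3 := peak_strict hb p h0 hne.1
        have h4 := hpeak x0
        linarith
      by_cases hWc : b p (Zval (avec p) s0) (avec q) + b q (Zval (avec q) t) (avec q)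
            + b r (Ival (avec p) (avec r) s2) (avec q)
          ≤ b p (Zval (avec p) s0) (avec p) + b q (Zval (avec q) t) (avec p)
            + b r (Ival (avec p) (avec r) s2) (avec p)
      · exfalso
        have hmax : ∀ z,
            b p (Zval (avec p) s0) z + b q (Zval (avec q) t) z + b r (Ival (avec p) (avec r) s2) z
            ≤ b p (Zval (avec p) s0) (avec p) + b q (Zval (avec q) t) (avec p)
              + b r (Ival (avec p) (avec r) s2) (avec p) := by
          intro z
          rcases hmem with h | h
          · have := hx0 z; rw [h] at this; exact this
          · refine (hx0 z).trans ?_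
            rw [h]; exact hWc
        have h := (MC3 hb hpq hpr hqr (Zval_mem _ h0.le) (Zval_mem _ ht.le)
          (Ival_mem _ _ hs2.le) (avec p) hmax (avec q)).2.2
        rw [Ival_zero _ _ _ hα.symm her.symm, Ival_self] at h
        linarith
      · push_neg at hWc
        have hmax : ∀ z,
            b p (Zval (avec p) s0) z + b q (Zval (avec q) t) z + b r (Ival (avec p) (avec r) s2) z
            ≤ b p (Zval (avec p) s0) (avec q) + b q (Zval (avec q) t) (avec q)
              + b r (Ival (avec p) (avec r) s2) (avec q) := by
          intro z
          rcases hmem with h | h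
          · refine (hx0 z).trans ?_
            rw [h]; exact hWc.le
          · have := hx0 z; rw [h] at this; exact this
        have h := (MC3 hb hpq hpr hqr (Zval_mem _ h0.le) (Zval_mem _ ht.le)
          (Ival_mem _ _ hs2.le) (avec q) hmax (avec p)).2.1
        rw [Zval_ne _ _ hα, Zval_self] at h
        linarith
    -- conclude flatness
    have hle := hpeak (avec q)
    by_contra hne2
    have hΔ : 0 < b r (Ival (avec p) (avec r) s2) (avec p)
        - b r (Ival (avec p) (avec r) s2) (avec q) := by
      rcases lt_or_eq_of_le hle with h | h
      · linarith
      · exact absurd h hne2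
    set Δ := b r (Ival (avec p) (avec r) s2) (avec p)
      - b r (Ival (avec p) (avec r) s2) (avec q) with hΔdef
    set D0 := b p (Zval (avec p) s0) (avec p) - b p (Zval (avec p) s0) (avec q) with hD0def
    have hmin : 0 < min Δ (s0 - D0) := lt_min hΔ (by linarith)
    have h1 : D0 < D0 + min Δ (s0 - D0) / 2 := by linarith
    have h2 : D0 + min Δ (s0 - D0) / 2 < s0 := by
      have := min_le_right Δ (s0 - D0)
      linarith
    have h3 := step2 (D0 + min Δ (s0 - D0) / 2) h1 h2
    have h4 := min_le_left Δ (s0 - D0)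
    linarith
  -- step 4
  have step4 : ∀ t : ℝ, 0 < t → ∀ s2 : ℝ, 0 < s2 →
      s2 < s0 - (b p (Zval (avec p) s0) (avec p) - b p (Zval (avec p) s0) (avec q)) →
      s2 ≤ b q (Zval (avec q) t) (avec q) - b q (Zval (avec q) t) (avec p) := by
    intro t ht s2 hs2 hs2'
    have hflat := step3 s2 hs2 hs2'
    have hpeak : ∀ x, b r (Ival (avec p) (avec r) s2) x ≤ b r (Ival (avec p) (avec r) s2) (avec p) :=
      fun x => ind_peak hb hpr hs2 x
    obtain ⟨x0, hx0⟩ : ∃ x0 : A, ∀ z,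
        b q (Zval (avec q) t) z + b r (Ival (avec p) (avec r) s2) z
        ≤ b q (Zval (avec q) t) x0 + b r (Ival (avec p) (avec r) s2) x0 :=
      ⟨amax _, amax_spec _⟩
    have hx0q : x0 = avec q := by
      by_contra hne
      have h := (MC2 hb hqr (Zval_mem _ ht.le) (Ival_mem _ _ hs2.le) x0 hx0 (avec q)).1
      rw [Zval_self, Zval_ne _ _ hne] at h
      have h2 := hpeak x0
      linarith
    have hmax : ∀ z, b q (Zval (avec q) t) z + b r (Ival (avec p) (avec r) s2) z
        ≤ b q (Zval (avec q) t) (avec q) + b r (Ival (avec p) (avec r) s2) (avec q) := by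
      intro z; have := hx0 z; rw [hx0q] at this; exact this
    have h := (MC2 hb hqr (Zval_mem _ ht.le) (Ival_mem _ _ hs2.le) (avec q) hmax (avec p)).2
    rw [Ival_self, Ival_zero _ _ _ hα.symm her.symm] at h
    linarith
  -- step 5
  set D0 := b p (Zval (avec p) s0) (avec p) - b p (Zval (avec p) s0) (avec q) with hD0def
  have hs : (0:ℝ) < (s0 - D0) / 2 := by linarith
  have hD' : 0 < b p (Zval (avec p) ((s0 - D0) / 2)) (avec p)
      - b p (Zval (avec p) ((s0 - D0) / 2)) (avec q) := by
    have := peak_strict hb p hs hα.symm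
    linarith
  have hfinal : ∀ t, 0 < t →
      b p (Zval (avec p) ((s0 - D0) / 2)) (avec p)
        - b p (Zval (avec p) ((s0 - D0) / 2)) (avec q) ≤ t := by
    intro t ht
    have hG := step4 t ht (3 * (s0 - D0) / 4) (by linarith) (by linarith)
    by_cases hW : b p (Zval (avec p) ((s0 - D0) / 2)) (avec q) + b q (Zval (avec q) t) (avec q)
        ≤ b p (Zval (avec p) ((s0 - D0) / 2)) (avec p) + b q (Zval (avec q) t) (avec p)
    · exfalso
      have := (pairA hb hpq hα hs ht hW).1
      linarith
    · push_neg at hW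
      exact (pairC hb hpq hα hs ht hW.le).2
  have := hfinal ((b p (Zval (avec p) ((s0 - D0) / 2)) (avec p)
      - b p (Zval (avec p) ((s0 - D0) / 2)) (avec q)) / 2) (by linarith)
  linarith


/-- L5 : no undershooting, when the third agent's peak equals the column peak. -/
lemma undershoot₂ (hb : ExPostClass (fun i => Rset (avec i)) b) {p q r : N}
    (hpq : p ≠ q) (hpr : p ≠ r) (hqr : q ≠ r)
    (hα : avec p ≠ avec q) (her : avec r = avec q) {s0 : ℝ} (h0 : 0 < s0) :
    s0 ≤ b p (Zval (avec p) s0) (avec p) - b p (Zval (avec p) s0) (avec q) := by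
  classical
  by_contra hcon
  push_neg at hcon
  have hd0 : 0 < b p (Zval (avec p) s0) (avec p) - b p (Zval (avec p) s0) (avec q) := by
    have := peak_strict hb p h0 hα.symm
    linarith
  set D0 := b p (Zval (avec p) s0) (avec p) - b p (Zval (avec p) s0) (avec q) with hD0def
  have hαr : avec p ≠ avec r := by rw [her]; exact hα
  have hstar : ∀ t : ℝ, 0 < t →
      t ≤ b q (Zval (avec q) t) (avec q) - b q (Zval (avec q) t) (avec p) := by
    intro t ht
    exact undershoot₁ hb hpq.symm hqr hpr hα.symm (by rw [her]; exact hα.symm) ht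
  have hstar2 : ∀ u : ℝ, 0 < u →
      u ≤ b r (Zval (avec q) u) (avec q) - b r (Zval (avec q) u) (avec p) := by
    intro u hu
    have h := undershoot₁ hb (p := r) (q := p) (r := q) hpr.symm hqr.symm hpq
      (by rw [her]; exact hα.symm) hα.symm hu
    rw [her] at h
    exact h
  have h52 : ∀ t : ℝ, 0 < t → t < D0 →
      b q (Zval (avec q) t) (avec q) - b q (Zval (avec q) t) (avec p) < D0 := by
    intro t ht htd
    by_cases hW : b p (Zval (avec p) s0) (avec p) + b q (Zval (avec q) t) (avec p)
        ≤ b p (Zval (avec p) s0) (avec q) + b q (Zval (avec q) t) (avec q)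
    · exfalso
      have := (pairC hb hpq hα h0 ht hW).2
      linarith
    · push_neg at hW
      linarith
  have h53 : ∀ t u : ℝ, 0 < t → 0 < u → D0 < t + u →
      s0 ≤ (b q (Zval (avec q) t) (avec q) - b q (Zval (avec q) t) (avec p))
         + (b r (Zval (avec q) u) (avec q) - b r (Zval (avec q) u) (avec p)) := by
    intro t u ht hu htu
    have hGt := hstar t ht
    have hGu := hstar2 u hu
    have hmemr : Zval (avec q) u ∈ Rset (avec r) := by rw [her]; exact Zval_mem _ hu.le
    obtain ⟨x0, hx0⟩ : ∃ x0 : A, ∀ z,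
        b p (Zval (avec p) s0) z + b q (Zval (avec q) t) z + b r (Zval (avec q) u) z
        ≤ b p (Zval (avec p) s0) x0 + b q (Zval (avec q) t) x0 + b r (Zval (avec q) u) x0 :=
      ⟨amax _, amax_spec _⟩
    have hmem : x0 = avec p ∨ x0 = avec q := by
      by_contra hne
      push_neg at hne
      have h := (MC3 hb hpq hpr hqr (Zval_mem _ h0.le) (Zval_mem _ ht.le) hmemr
        x0 hx0 (avec q)).1
      rw [Zval_ne _ _ hα.symm, Zval_ne _ _ hne.1] at h
      have h3 := peak_strict hb q ht hne.2
      have h4 := peak_strict hb r hu (show x0 ≠ avec r by rw [her]; exact hne.2)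
      rw [her] at h4
      linarith
    have hWc : b p (Zval (avec p) s0) (avec p) + b q (Zval (avec q) t) (avec p)
          + b r (Zval (avec q) u) (avec p)
        ≤ b p (Zval (avec p) s0) (avec q) + b q (Zval (avec q) t) (avec q)
          + b r (Zval (avec q) u) (avec q) := by
      linarith
    have hmax : ∀ z,
        b p (Zval (avec p) s0) z + b q (Zval (avec q) t) z + b r (Zval (avec q) u) z
        ≤ b p (Zval (avec p) s0) (avec q) + b q (Zval (avec q) t) (avec q)
          + b r (Zval (avec q) u) (avec q) := by
      intro z
      rcases hmem with h | h
      · refine (hx0 z).trans ?_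
        rw [h]; exact hWc
      · have := hx0 z; rw [h] at this; exact this
    have h := (MC3 hb hpq hpr hqr (Zval_mem _ h0.le) (Zval_mem _ ht.le) hmemr
      (avec q) hmax (avec p)).1
    rw [Zval_self, Zval_ne _ _ hα.symm] at h
    linarith
  have h54 : ∀ u : ℝ, 0 < u → u < D0 →
      s0 - D0 < b r (Zval (avec q) u) (avec q) - b r (Zval (avec q) u) (avec p) := by
    intro u hu hud
    have h1 := h53 (D0 - u / 2) u (by linarith) hu (by linarith)
    have h2 := h52 (D0 - u / 2) (by linarith) (by linarith)
    linarith
  have hs : (0:ℝ) < (s0 - D0) / 2 := by linarith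
  have hD' : 0 < b p (Zval (avec p) ((s0 - D0) / 2)) (avec p)
      - b p (Zval (avec p) ((s0 - D0) / 2)) (avec q) := by
    have := peak_strict hb p hs hα.symm
    linarith
  have hfinal : ∀ u : ℝ, 0 < u → u < D0 →
      b p (Zval (avec p) ((s0 - D0) / 2)) (avec p)
        - b p (Zval (avec p) ((s0 - D0) / 2)) (avec q) ≤ u := by
    intro u hu hud
    have hfloor := h54 u hu hud
    by_cases hW : b p (Zval (avec p) ((s0 - D0) / 2)) (avec r) + b r (Zval (avec r) u) (avec r)
        ≤ b p (Zval (avec p) ((s0 - D0) / 2)) (avec p) + b r (Zval (avec r) u) (avec p)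
    · exfalso
      have hA := (pairA hb hpr hαr hs hu hW).1
      rw [her] at hA
      linarith
    · push_neg at hW
      have hC := (pairC hb hpr hαr hs hu hW.le).2
      rw [her] at hC
      exact hC
  have hmin : 0 < min (b p (Zval (avec p) ((s0 - D0) / 2)) (avec p)
      - b p (Zval (avec p) ((s0 - D0) / 2)) (avec q)) D0 := lt_min hD' hd0
  have hm1 := min_le_left (b p (Zval (avec p) ((s0 - D0) / 2)) (avec p)
      - b p (Zval (avec p) ((s0 - D0) / 2)) (avec q)) D0
  have hm2 := min_le_right (b p (Zval (avec p) ((s0 - D0) / 2)) (avec p)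
      - b p (Zval (avec p) ((s0 - D0) / 2)) (avec q)) D0
  have := hfinal (min (b p (Zval (avec p) ((s0 - D0) / 2)) (avec p)
      - b p (Zval (avec p) ((s0 - D0) / 2)) (avec q)) D0 / 2) (by linarith) (by linarith)
  linarith

/-- L6 : no undershooting. -/
lemma undershoot (hb : ExPostClass (fun i => Rset (avec i)) b) {p q r : N}
    (hpq : p ≠ q) (hpr : p ≠ r) (hqr : q ≠ r)
    (hα : avec p ≠ avec q) {s0 : ℝ} (h0 : 0 < s0) :
    s0 ≤ b p (Zval (avec p) s0) (avec p) - b p (Zval (avec p) s0) (avec q) := by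
  by_cases hcase : avec r = avec q
  · exact undershoot₂ hb hpq hpr hqr hα hcase h0
  · exact undershoot₁ hb hpq hpr hqr hα hcase h0



end Game

end Aux

/-- Let `n ≥ 3`, `|A| ≥ 3`, and let `b` be an ex-post equilibrium for the class of VCG
games over `(N, A, R(a⃗))`.  On a single-minded valuation at her own maximum, an agent's
bid gap between her maximum and any other agent's maximum equals the value `s`. -/
theorem stmt19 [Fintype N] [DecidableEq N] [Fintype A] [DecidableEq A]
    (hn : 3 ≤ Fintype.card N) (hA : 3 ≤ Fintype.card A) (avec : N → A)
    (b : N → (A → ℝ) → A → ℝ)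
    (hb : ExPostClass (fun i => Rset (avec i)) b) :
    ∀ i : N, ∀ s : ℝ, 0 < s → ∀ k : N, avec k ≠ avec i →
      b i (Zval (avec i) s) (avec i) - b i (Zval (avec i) s) (avec k) = s := by
  intro i s hs k hk
  haveI : Nonempty A := Fintype.card_pos_iff.mp (by omega)
  have hik : i ≠ k := by
    intro h
    exact hk (by rw [h])
  obtain ⟨j, hj⟩ : ∃ j : N, j ∉ ({i, k} : Finset N) := by
    by_contra hcon
    push_neg at hcon
    have huniv : ({i, k} : Finset N) = Finset.univ :=
      Finset.eq_univ_iff_forall.mpr hcon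
    have hcard : (({i, k} : Finset N)).card ≤ 2 := by
      refine (Finset.card_insert_le _ _).trans ?_
      simp
    rw [huniv, Finset.card_univ] at hcard
    omega
  have hji : j ≠ i := by intro h; apply hj; simp [h]
  have hjk : j ≠ k := by intro h; apply hj; simp [h]
  have hα : avec i ≠ avec k := hk.symm
  have hge : s ≤ b i (Zval (avec i) s) (avec i) - b i (Zval (avec i) s) (avec k) :=
    undershoot hb (p := i) (q := k) (r := j) hik hji.symm hjk.symm hα hs
  have hle : b i (Zval (avec i) s) (avec i) - b i (Zval (avec i) s) (avec k) ≤ s := by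
    by_contra hcon
    push_neg at hcon
    set t : ℝ := (s + (b i (Zval (avec i) s) (avec i) - b i (Zval (avec i) s) (avec k))) / 2
      with htdef
    have hts : s < t := by rw [htdef]; linarith
    have htd : t < b i (Zval (avec i) s) (avec i) - b i (Zval (avec i) s) (avec k) := by
      rw [htdef]; linarith
    have ht : 0 < t := lt_trans hs hts
    have hstar : t ≤ b k (Zval (avec k) t) (avec k) - b k (Zval (avec k) t) (avec i) :=
      undershoot hb (p := k) (q := i) (r := j) hik.symm hjk.symm hji.symm hk ht
    by_cases hW : b i (Zval (avec i) s) (avec k) + b k (Zval (avec k) t) (avec k)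
        ≤ b i (Zval (avec i) s) (avec i) + b k (Zval (avec k) t) (avec i)
    · have hA2 := (pairA hb hik hα hs ht hW).1
      linarith
    · push_neg at hW
      have hC2 := (pairC hb hik hα hs ht hW.le).2
      linarith
  linarith
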